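/- Discrete covariance classification: fix s ∈ ℕ and J ⊆ ℕ. A positive-operator-valued map E on the power set of D_s = {θ_{s,0},...,θ_{s,s}} with values in L(H_J), satisfying E(D_s) = I|_{H_J} and R(θ_{s,k})E({θ_{s,l}})R(θ_{s,k})* = E({θ_{s,k+l mod (s+1)}}), exists with E({θ_{s,l}}) = (s+1)^{-1} R(θ_{s,l}) A R(θ_{s,l})* if and only if A is a bounded positive operator on H_J with ⟨n|A|n⟩ = 1 for all n ∈ J and ⟨n|A|m⟩ = 0 whenever n ≠ m and |n−m| ∈ (s+1)ℤ⁺. -/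

import Mathlib

open scoped Real
open ContinuousLinearMap

/-!
Conjugating by `R(θ)` multiplies the matrix entry `⟨n|B|m⟩` by the phase `e^{i(n-m)θ}`.
At the angles `θ_{s,k}` this phase is `ω^{k(n-m)}` for the primitive `(s+1)`-th root of
unity `ω`, so covariance reduces to `ω^{s+1} = 1`, and summing over `k` kills exactly the
entries with `s+1 ∤ n-m`. Normalization thus only constrains `⟨n|A|m⟩` for `s+1 ∣ n-m`.
-/

/-- The discrete covariant operator family `E({θ_{s,l}}) = (s+1)⁻¹ R(θ_{s,l}) A R(θ_{s,l})*`,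
where `θ_{s,l} = 2πl/(s+1)`. -/
noncomputable def discE {H : Type*} [NormedAddCommGroup H] [InnerProductSpace ℂ H]
    [CompleteSpace H] (R : ℝ → (H →L[ℂ] H)) (A : H →L[ℂ] H) (s l : ℕ) : H →L[ℂ] H :=
  (((1 : ℝ) / (s + 1) : ℝ) : ℂ) •
    ((R (2 * π * l / (s + 1))) ∘L A ∘L ContinuousLinearMap.adjoint (R (2 * π * l / (s + 1))))

open Complex ComplexConjugate

lemma IsPrimitiveRoot.sum_pow_zpow {K : Type*} [Field K] {ω : K} {k : ℕ}
    (hω : IsPrimitiveRoot ω k) (d : ℤ) :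
    ∑ l ∈ Finset.range k, (ω ^ l) ^ d = if (k : ℤ) ∣ d then (k : K) else 0 := by
  have hpow : ∀ l : ℕ, (ω ^ l) ^ d = (ω ^ d) ^ l := fun l => by
    rw [← zpow_natCast, ← zpow_mul, ← zpow_natCast, ← zpow_mul, mul_comm]
  simp_rw [hpow]
  split_ifs with hdvd
  · simp [(hω.zpow_eq_one_iff_dvd d).mpr hdvd]
  · have hne : ω ^ d ≠ 1 := fun h => hdvd ((hω.zpow_eq_one_iff_dvd d).mp h)
    rw [geom_sum_eq hne, ← zpow_natCast, ← zpow_mul, mul_comm, zpow_mul, zpow_natCast,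
      hω.pow_eq_one, one_zpow, sub_self, zero_div]

lemma exp_I_mul_int_mul_angle (s k : ℕ) (d : ℤ) :
    exp (I * d * ((2 * π * k / (s + 1) : ℝ) : ℂ)) = (exp (2 * π * I / (s + 1)) ^ k) ^ d := by
  rw [← exp_nat_mul, ← exp_int_mul]
  congr 1
  push_cast
  ring

lemma isPrimitiveRoot_exp_two_pi_I_div_succ (s : ℕ) :
    IsPrimitiveRoot (exp (2 * π * I / (s + 1))) (s + 1) := by
  exact_mod_cast isPrimitiveRoot_exp (s + 1) s.succ_ne_zero

section Conjugation

variable {ι H : Type*} [NormedAddCommGroup H] [InnerProductSpace ℂ H] [CompleteSpace H]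

lemma inner_comp_comp_adjoint_apply {v : ι → H} {c : ι → ℂ} {T : H →L[ℂ] H}
    (hT : ∀ i, adjoint T (v i) = c i • v i) (B : H →L[ℂ] H) (i j : ι) :
    inner ℂ (v i) ((T ∘L B ∘L adjoint T) (v j)) = conj (c i) * c j * inner ℂ (v i) (B (v j)) := by
  rw [comp_apply, comp_apply, ← adjoint_inner_left, hT, hT, inner_smul_left, map_smul,
    inner_smul_right, mul_assoc]

variable {v : ℕ → H} {R : ℝ → (H →L[ℂ] H)}

lemma inner_rotation_conj_apply (hR : ∀ θ : ℝ, ∀ n : ℕ, R θ (v n) = exp (I * n * θ) • v n)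
    (hRadj : ∀ θ : ℝ, adjoint (R θ) = R (-θ)) (θ : ℝ) (B : H →L[ℂ] H) (n m : ℕ) :
    inner ℂ (v n) ((R θ ∘L B ∘L adjoint (R θ)) (v m)) =
      exp (I * ((n - m : ℤ) : ℂ) * θ) * inner ℂ (v n) (B (v m)) := by
  rw [inner_comp_comp_adjoint_apply (fun n => by rw [hRadj, hR]) B n m, ← exp_conj, ← exp_add]
  congr 2
  simp only [map_mul, conj_I, conj_natCast, conj_ofReal]
  push_cast
  ring

lemma inner_discE_apply (hR : ∀ θ : ℝ, ∀ n : ℕ, R θ (v n) = exp (I * n * θ) • v n)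
    (hRadj : ∀ θ : ℝ, adjoint (R θ) = R (-θ)) (A : H →L[ℂ] H) (s l n m : ℕ) :
    inner ℂ (v n) (discE R A s l (v m)) =
      ((s : ℂ) + 1)⁻¹ * (exp (2 * π * I / (s + 1)) ^ l) ^ ((n : ℤ) - m) *
        inner ℂ (v n) (A (v m)) := by
  rw [discE, smul_apply, inner_smul_right, inner_rotation_conj_apply hR hRadj,
    exp_I_mul_int_mul_angle]
  push_cast
  ring

lemma inner_rotation_conj_discE_apply
    (hR : ∀ θ : ℝ, ∀ n : ℕ, R θ (v n) = exp (I * n * θ) • v n)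
    (hRadj : ∀ θ : ℝ, adjoint (R θ) = R (-θ)) (A : H →L[ℂ] H) (s : ℕ) (k l : Fin (s + 1))
    (n m : ℕ) :
    inner ℂ (v n) ((R (2 * π * k / (s + 1)) ∘L discE R A s l ∘L
        adjoint (R (2 * π * k / (s + 1)))) (v m)) =
      inner ℂ (v n) (discE R A s ((k + l : Fin (s + 1)) : ℕ) (v m)) := by
  set ω := exp (2 * π * I / (s + 1))
  have hmod : ω ^ ((k : ℕ) + l) = ω ^ ((k + l : Fin (s + 1)) : ℕ) := by
    rw [Fin.val_add, ← pow_eq_pow_mod _ (isPrimitiveRoot_exp_two_pi_I_div_succ s).pow_eq_one]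
  rw [inner_rotation_conj_apply hR hRadj, inner_discE_apply hR hRadj,
    inner_discE_apply hR hRadj, exp_I_mul_int_mul_angle, ← hmod, pow_add, mul_zpow]
  ring

lemma inner_sum_discE_apply (hR : ∀ θ : ℝ, ∀ n : ℕ, R θ (v n) = exp (I * n * θ) • v n)
    (hRadj : ∀ θ : ℝ, adjoint (R θ) = R (-θ)) (A : H →L[ℂ] H) (s n m : ℕ) :
    inner ℂ (v n) ((∑ l : Fin (s + 1), discE R A s (l : ℕ)) (v m)) =
      if ((s : ℤ) + 1) ∣ ((n : ℤ) - m) then inner ℂ (v n) (A (v m)) else 0 := by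
  have hs : ((s : ℂ) + 1) ≠ 0 := by exact_mod_cast s.succ_ne_zero
  simp_rw [sum_apply, inner_sum, inner_discE_apply hR hRadj, ← Finset.sum_mul,
    ← Finset.mul_sum]
  rw [Fin.sum_univ_eq_sum_range (fun l => (exp (2 * π * I / (s + 1)) ^ l) ^ ((n : ℤ) - m)),
    (isPrimitiveRoot_exp_two_pi_I_div_succ s).sum_pow_zpow]
  push_cast
  split_ifs
  · field_simp
  · simp

end Conjugation

theorem stmt16_general {H : Type*} [NormedAddCommGroup H] [InnerProductSpace ℂ H] [CompleteSpace H]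
    (e : HilbertBasis ℕ ℂ H)
    (R : ℝ → (H →L[ℂ] H))
    (hR : ∀ θ : ℝ, ∀ n : ℕ, R θ (e n) = Complex.exp (Complex.I * n * θ) • e n)
    (hRadj : ∀ θ : ℝ, ContinuousLinearMap.adjoint (R θ) = R (-θ))
    (s : ℕ) (J : Set ℕ)
    (A : H →L[ℂ] H) :
    -- covariance and normalization of the family `E` over `H_J` …
    ((∀ k l : Fin (s + 1), ∀ n ∈ J, ∀ m ∈ J,
        (inner ℂ (e n) (((R (2 * π * k / (s + 1))) ∘L (discE R A s l) ∘L
            ContinuousLinearMap.adjoint (R (2 * π * k / (s + 1)))) (e m)) : ℂ) =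
        (inner ℂ (e n) ((discE R A s ((k + l : Fin (s + 1)) : ℕ)) (e m)) : ℂ)) ∧
      (∀ n ∈ J, ∀ m ∈ J,
        (inner ℂ (e n) ((∑ l : Fin (s + 1), discE R A s (l : ℕ)) (e m)) : ℂ) =
          if n = m then 1 else 0)) ↔
    -- … holds exactly when `A` has unit diagonal and the required vanishing pattern on `J`
    ((∀ n ∈ J, (inner ℂ (e n) (A (e n)) : ℂ) = 1) ∧
      (∀ n ∈ J, ∀ m ∈ J, n ≠ m → ((s : ℤ) + 1) ∣ ((n : ℤ) - (m : ℤ)) →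
        (inner ℂ (e n) (A (e m)) : ℂ) = 0)) := by
  simp only [inner_sum_discE_apply hR hRadj]
  constructor
  · rintro ⟨-, hnorm⟩
    refine ⟨fun n hn => by simpa using hnorm n hn n hn, fun n hn m hm hne hdvd => ?_⟩
    simpa [hne, hdvd] using hnorm n hn m hm
  · rintro ⟨hdiag, hoff⟩
    refine ⟨fun k l n _ m _ => inner_rotation_conj_discE_apply hR hRadj A s k l n m,
      fun n hn m hm => ?_⟩
    rcases eq_or_ne n m with rfl | hne
    · simpa using hdiag n hn
    · by_cases hdvd : ((s : ℤ) + 1) ∣ ((n : ℤ) - m)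
      · simp [hne, hdvd, hoff n hn m hm hne hdvd]
      · simp [hne, hdvd]

/-- Discrete covariance classification: the family `E({θ_{s,l}}) = (s+1)⁻¹ R(θ_{s,l}) A R(θ_{s,l})*`
(`A` a bounded positive operator) is a normalized covariant positive operator measure on
`D_s` over `H_J` if and only if `⟨n|A|n⟩ = 1` for all `n ∈ J` and `⟨n|A|m⟩ = 0` whenever
`n ≠ m`, `n, m ∈ J`, and `|n−m| ∈ (s+1)ℤ⁺`. -/
theorem stmt16 {H : Type*} [NormedAddCommGroup H] [InnerProductSpace ℂ H] [CompleteSpace H]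
    (e : HilbertBasis ℕ ℂ H)
    (R : ℝ → (H →L[ℂ] H))
    (hR : ∀ θ : ℝ, ∀ n : ℕ, R θ (e n) = Complex.exp (Complex.I * n * θ) • e n)
    (hRadj : ∀ θ : ℝ, ContinuousLinearMap.adjoint (R θ) = R (-θ))
    (s : ℕ) (J : Set ℕ) (hJ : J.Nonempty)
    (A : H →L[ℂ] H) (hA : A.IsPositive) :
    -- covariance and normalization of the family `E` over `H_J` …
    ((∀ k l : Fin (s + 1), ∀ n ∈ J, ∀ m ∈ J,
        (inner ℂ (e n) (((R (2 * π * k / (s + 1))) ∘L (discE R A s l) ∘L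
            ContinuousLinearMap.adjoint (R (2 * π * k / (s + 1)))) (e m)) : ℂ) =
        (inner ℂ (e n) ((discE R A s ((k + l : Fin (s + 1)) : ℕ)) (e m)) : ℂ)) ∧
      (∀ n ∈ J, ∀ m ∈ J,
        (inner ℂ (e n) ((∑ l : Fin (s + 1), discE R A s (l : ℕ)) (e m)) : ℂ) =
          if n = m then 1 else 0)) ↔
    -- … holds exactly when `A` has unit diagonal and the required vanishing pattern on `J`
    ((∀ n ∈ J, (inner ℂ (e n) (A (e n)) : ℂ) = 1) ∧
      (∀ n ∈ J, ∀ m ∈ J, n ≠ m → ((s : ℤ) + 1) ∣ ((n : ℤ) - (m : ℤ)) →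
        (inner ℂ (e n) (A (e m)) : ℂ) = 0)) :=
  stmt16_general e R hR hRadj s J A
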